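/- Let ω be a counting measure associated to a locally finite configuration {y_1, y_2, …} of distinct points in X, and let f : X^n → [0,∞] be measurable. Then ∫_{X^n} f(x_1,…,x_n) ω(dx_1)⋯ω(dx_n) = ∑_{P = {P_1,…,P_k} ∈ 𝒫_n} ∫_{X^k_{≠}} f(y^{[P]}) ω(dy_1)⋯ω(dy_k), where 𝒫_n is the set of partitions of {1,…,n}, X^k_{≠} is the set of k-tuples of pairwise distinct points, and y^{[P]} ∈ X^n is defined by y_i^{[P]} = y_j whenever i ∈ P_j. -/

import Mathlib

/-! Writing `ω` as a sum of Dirac masses turns the `n`-fold integral into the sum of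
`f (y ∘ g)` over all labellings `g : Fin n → ι`. Every labelling factors uniquely as
`h ∘ P.toParts`, where `P` is the partition of `Fin n` into the level sets of `g` and `h` is an
injective labelling of its blocks. Regrouping the sum by `P`, the inner sum over injective `h` is
the integral over pairwise distinct points, because `y` is injective. -/

open MeasureTheory ENNReal Function

theorem ENNReal.tsum_pi_prod {α ι : Type*} [Fintype α] (a : α → ι → ℝ≥0∞) :
    ∑' g : α → ι, ∏ i, a i (g i) = ∏ i, ∑' j, a i j := by
  refine Fintype.induction_empty_option ?_ ?_ ?_ α a
    (P := fun α _ => ∀ a : α → ι → ℝ≥0∞,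
      ∑' g : α → ι, ∏ i, a i (g i) = ∏ i, ∑' j, a i j)
  · intro α β _ e ih a
    let := Fintype.ofEquiv β e.symm
    rw [← (e.arrowCongr (Equiv.refl ι)).tsum_eq, ← e.prod_comp]
    simpa [Equiv.arrowCongr, ← e.prod_comp] using ih (fun i => a (e i))
  · intro a
    simp
  · intro α _ ih a
    rw [← (Equiv.piOptionEquivProd (β := fun _ => ι)).symm.tsum_eq, ENNReal.tsum_prod',
      Fintype.prod_option, ← ih, ← ENNReal.tsum_mul_right]
    simp [Fintype.prod_option, ENNReal.tsum_mul_left]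

namespace MeasureTheory.Measure

variable {X ι α : Type*} [MeasurableSpace X] [Fintype α] {y : ι → X} {μ : Measure X}

theorem pi_eq_sum_dirac [SigmaFinite μ] (hμ : μ = sum fun i => dirac (y i)) :
    Measure.pi (fun _ : α => μ) = sum fun g : α → ι => dirac (y ∘ g) := by
  refine pi_eq fun s hs => ?_
  have hs' : MeasurableSet (Set.univ.pi s) := .univ_pi hs
  simp only [sum_apply _ hs', dirac_apply' _ hs', hμ, sum_apply _ (hs _), dirac_apply' _ (hs _)]
  rw [← ENNReal.tsum_pi_prod]
  simp [← Finset.coe_univ]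

theorem lintegral_pi_eq_tsum [SigmaFinite μ] [MeasurableSingletonClass X]
    (hμ : μ = sum fun i => dirac (y i)) (f : (α → X) → ℝ≥0∞) :
    ∫⁻ x, f x ∂(Measure.pi fun _ : α => μ) = ∑' g : α → ι, f (y ∘ g) := by
  simp [pi_eq_sum_dirac hμ, lintegral_sum_measure, lintegral_dirac]

theorem lintegral_pi_indicator_injective [SigmaFinite μ] [MeasurableSingletonClass X]
    (hy : Injective y) (hμ : μ = sum fun i => dirac (y i)) (F : (α → X) → ℝ≥0∞) :
    ∫⁻ z, {z : α → X | Injective z}.indicator F z ∂(Measure.pi fun _ : α => μ)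
      = ∑' h : {h : α → ι // Injective h}, F (y ∘ h) := by
  rw [lintegral_pi_eq_tsum hμ]
  refine .trans (tsum_congr fun g => ?_)
    (tsum_subtype {h : α → ι | Injective h} (F ∘ (y ∘ ·))).symm
  by_cases hg : Injective g
  · simp [hg, hy.comp hg]
  · simp [hg, hy.of_comp_iff]

end MeasureTheory.Measure

namespace Finpartition

variable {α ι : Type*} [Fintype α] [DecidableEq α]

def toParts (P : Finpartition (Finset.univ : Finset α)) (i : α) : P.parts :=
  ⟨P.part i, P.part_mem.mpr (Finset.mem_univ i)⟩

theorem toParts_surjective (P : Finpartition (Finset.univ : Finset α)) :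
    Surjective P.toParts := fun s => by
  obtain ⟨i, hi⟩ := P.nonempty_of_mem_parts s.2
  exact ⟨i, Subtype.ext (P.part_eq_of_mem s.2 hi)⟩

theorem toParts_eq_toParts_iff (P : Finpartition (Finset.univ : Finset α)) {i j : α} :
    P.toParts i = P.toParts j ↔ j ∈ P.part i := by
  rw [toParts, toParts, Subtype.mk.injEq, eq_comm,
    P.mem_part_iff_part_eq_part (Finset.mem_univ j) (Finset.mem_univ i)]

theorem ext_part {P Q : Finpartition (Finset.univ : Finset α)} (h : ∀ i, P.part i = Q.part i) :
    P = Q := by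
  have parts_eq (R : Finpartition (Finset.univ : Finset α)) : R.parts = .image R.part .univ :=
    Finset.coe_injective <| by
      rw [Finset.coe_image]
      exact (R.part_surjOn.image_eq_of_mapsTo fun i _ => R.part_mem.mpr (Finset.mem_univ i)).symm
  exact Finpartition.ext (by rw [parts_eq, parts_eq, funext h])

noncomputable def ker (g : α → ι) : Finpartition (Finset.univ : Finset α) := by
  classical exact ofSetoid (Setoid.ker g)

theorem mem_part_ker {g : α → ι} {i j : α} : j ∈ (ker g).part i ↔ g i = g j := by
  classical exact mem_part_ofSetoid_iff_rel

theorem ker_comp_toParts (P : Finpartition (Finset.univ : Finset α)) {h : P.parts → ι}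
    (hh : Injective h) : ker (h ∘ P.toParts) = P :=
  ext_part fun i => Finset.ext fun j => by
    rw [mem_part_ker, comp_apply, comp_apply, hh.eq_iff, toParts_eq_toParts_iff]

theorem exists_injective_comp_toParts_eq (g : α → ι) :
    ∃ h : (ker g).parts → ι, Injective h ∧ h ∘ (ker g).toParts = g := by
  have key {i j : α} : (ker g).toParts i = (ker g).toParts j ↔ g i = g j := by
    rw [toParts_eq_toParts_iff, mem_part_ker]
  let s := surjInv (ker g).toParts_surjective
  refine ⟨g ∘ s, fun a b hab => ?_, funext fun i => ?_⟩
  · rwa [← surjInv_eq (ker g).toParts_surjective a, ← surjInv_eq (ker g).toParts_surjective b,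
      key]
  · exact key.mp (surjInv_eq (ker g).toParts_surjective _)

noncomputable def sigmaInjectiveEquiv :
    (Σ P : Finpartition (Finset.univ : Finset α), {h : P.parts → ι // Injective h}) ≃
      (α → ι) :=
  Equiv.ofBijective (fun x => x.2.1 ∘ x.1.toParts) <| by
    refine ⟨?_, fun g => ?_⟩
    · rintro ⟨P, h, hh⟩ ⟨Q, k, hk⟩ (hhk : h ∘ P.toParts = k ∘ Q.toParts)
      obtain rfl : P = Q := by rw [← ker_comp_toParts P hh, hhk, ker_comp_toParts Q hk]
      obtain rfl : h = k := P.toParts_surjective.injective_comp_right hhk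
      rfl
    · obtain ⟨h, hh, hg⟩ := exists_injective_comp_toParts_eq g
      exact ⟨⟨ker g, h, hh⟩, hg⟩

end Finpartition

theorem stmt_5_general {X : Type*} [MetricSpace X] [MeasurableSpace X] [BorelSpace X]
    (ι : Type*) (y : ι → X) (hy : Function.Injective y)
    (ω : Measure X) [SigmaFinite ω] (hω : ω = Measure.sum fun i => Measure.dirac (y i))
    (n : ℕ) (f : (Fin n → X) → ℝ≥0∞) :
    ∫⁻ x : Fin n → X, f x ∂(Measure.pi fun _ : Fin n => ω)
      = ∑' P : Finpartition (Finset.univ : Finset (Fin n)),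
          ∫⁻ z : { s // s ∈ P.parts } → X,
            Set.indicator {z : { s // s ∈ P.parts } → X | Function.Injective z}
              (fun z => f (fun i => z ⟨P.part i, P.part_mem.mpr (Finset.mem_univ i)⟩)) z
            ∂(Measure.pi fun _ : { s // s ∈ P.parts } => ω) := calc
  _ = ∑' g : Fin n → ι, f (y ∘ g) := Measure.lintegral_pi_eq_tsum hω f
  _ = ∑' x : Σ P : Finpartition (Finset.univ : Finset (Fin n)),
          {h : P.parts → ι // Injective h}, f (y ∘ x.2.1 ∘ x.1.toParts) :=
    (Finpartition.sigmaInjectiveEquiv.tsum_eq fun g => f (y ∘ g)).symm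
  _ = _ := (ENNReal.tsum_sigma' _).trans <| tsum_congr fun P =>
    (Measure.lintegral_pi_indicator_injective hy hω fun z => f (z ∘ P.toParts)).symm

/-- Decomposition of a multiple integral against the counting measure of a configuration
according to partitions recording which coordinates coincide. -/
theorem stmt_5 {X : Type*} [MetricSpace X] [LocallyCompactSpace X]
    [TopologicalSpace.SeparableSpace X] [MeasurableSpace X] [BorelSpace X]
    (ι : Type*) [Countable ι] (y : ι → X) (hy : Function.Injective y)
    (ω : Measure X) [SigmaFinite ω] (hω : ω = Measure.sum fun i => Measure.dirac (y i))
    (n : ℕ) (f : (Fin n → X) → ℝ≥0∞) (hf : Measurable f) :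
    ∫⁻ x : Fin n → X, f x ∂(Measure.pi fun _ : Fin n => ω)
      = ∑' P : Finpartition (Finset.univ : Finset (Fin n)),
          ∫⁻ z : { s // s ∈ P.parts } → X,
            Set.indicator {z : { s // s ∈ P.parts } → X | Function.Injective z}
              (fun z => f (fun i => z ⟨P.part i, P.part_mem.mpr (Finset.mem_univ i)⟩)) z
            ∂(Measure.pi fun _ : { s // s ∈ P.parts } => ω) :=
  stmt_5_general ι y hy ω hω n f
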